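/- Let S = (P, L) be a generalized quadrangle of order (2,2) and let (R, ψ) be a faithful representation of S with |R| = 2^4. If a, b, c are three distinct points of P with r_a r_b r_c = 1, then {a,b,c} is a line of S or a complete 3-arc of S. -/

import Mathlib

open scoped Classical

/-- A slim partial linear space: a nonempty point set, a nonempty collection of
lines each of which is a 3-element set of points, such that any two distinct
points lie in at most one common line. -/
structure SlimPLS (P : Type*) where
  lines : Set (Finset P)
  nonempty_pts : Nonempty P
  nonempty_lines : lines.Nonempty
  three_points : ∀ l ∈ lines, l.card = 3
  unique_line : ∀ l₁ ∈ lines, ∀ l₂ ∈ lines, ∀ x y : P,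
    x ≠ y → x ∈ l₁ → y ∈ l₁ → x ∈ l₂ → y ∈ l₂ → l₁ = l₂

namespace SlimPLS

variable {P : Type*}

/-- Two points are collinear if they are distinct and lie on a common line. -/
def Collinear (S : SlimPLS P) (x y : P) : Prop :=
  x ≠ y ∧ ∃ l ∈ S.lines, x ∈ l ∧ y ∈ l

/-- The collinearity graph of a slim partial linear space. -/
def graph (S : SlimPLS P) : SimpleGraph P where
  Adj x y := S.Collinear x y
  symm := ⟨fun x y h => ⟨Ne.symm h.1, h.2.elim fun l hl => ⟨l, hl.1, hl.2.2, hl.2.1⟩⟩⟩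
  loopless := ⟨fun x h => h.1 rfl⟩

/-- `S` is a generalized quadrangle of order `(2, t)`: it is connected, no point
is collinear with all other points, every point is on exactly `t+1` lines, and
for every point `x` and line `l` with `x ∉ l` there is exactly one point of `l`
collinear with `x`. -/
def IsGQ (S : SlimPLS P) (t : ℕ) : Prop :=
  S.graph.Connected ∧
  (∀ x : P, ∃ y : P, y ≠ x ∧ ¬ S.Collinear x y) ∧
  (∀ x : P, {l | l ∈ S.lines ∧ x ∈ l}.ncard = t + 1) ∧
  (∀ x : P, ∀ l ∈ S.lines, x ∉ l → ∃! y : P, y ∈ l ∧ S.Collinear x y)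

/-- A set of points is an arc if its points are pairwise non-collinear. -/
def IsArc (S : SlimPLS P) (T : Set P) : Prop :=
  ∀ x ∈ T, ∀ y ∈ T, x ≠ y → ¬ S.Collinear x y

/-- `{a,b,c}` is a complete 3-arc: three pairwise distinct, pairwise
non-collinear points not contained in a 4-arc. -/
def Complete3Arc (S : SlimPLS P) (a b c : P) : Prop :=
  a ≠ b ∧ a ≠ c ∧ b ≠ c ∧ S.IsArc {a, b, c} ∧
  ∀ d : P, d ∉ ({a, b, c} : Set P) → ¬ S.IsArc (insert d {a, b, c})

/-- `{a,b,c}` is a complete 3-arc of the subset `Q`: three pairwise distinct,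
pairwise non-collinear points of `Q` not contained in a 4-arc inside `Q`. -/
def Complete3ArcIn (S : SlimPLS P) (Q : Set P) (a b c : P) : Prop :=
  a ∈ Q ∧ b ∈ Q ∧ c ∈ Q ∧ a ≠ b ∧ a ≠ c ∧ b ≠ c ∧ S.IsArc {a, b, c} ∧
  ∀ d ∈ Q, d ∉ ({a, b, c} : Set P) → ¬ S.IsArc (insert d {a, b, c})

/-- `Q` is a sub-generalized-quadrangle of order `(2,t)` of `S`: together with
the lines of `S` contained in it, `Q` is a `(2,t)`-GQ; in particular any line
meeting `Q` in at least two points is contained in `Q`. -/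
def IsSubGQ (S : SlimPLS P) (Q : Set P) (t : ℕ) : Prop :=
  Q.Nonempty ∧
  (∃ l ∈ S.lines, (l : Set P) ⊆ Q) ∧
  (∀ l ∈ S.lines, ∀ x ∈ l, ∀ y ∈ l, x ≠ y → x ∈ Q → y ∈ Q → (l : Set P) ⊆ Q) ∧
  (SimpleGraph.induce Q S.graph).Connected ∧
  (∀ x ∈ Q, ∃ y ∈ Q, y ≠ x ∧ ¬ S.Collinear x y) ∧
  (∀ x ∈ Q, {l | l ∈ S.lines ∧ x ∈ l ∧ (l : Set P) ⊆ Q}.ncard = t + 1) ∧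
  (∀ x ∈ Q, ∀ l ∈ S.lines, (l : Set P) ⊆ Q → x ∉ l → ∃! y : P, y ∈ l ∧ S.Collinear x y)

/-- `S` is a near hexagon: connected of diameter 3, no point collinear with all
other points, and for every point `x` and line `l` there is a unique point of
`l` nearest to `x`. -/
def IsNearHexagon (S : SlimPLS P) : Prop :=
  S.graph.Connected ∧
  (∀ x y : P, S.graph.dist x y ≤ 3) ∧
  (∃ x y : P, S.graph.dist x y = 3) ∧
  (∀ x : P, ∃ y : P, y ≠ x ∧ ¬ S.Collinear x y) ∧
  (∀ x : P, ∀ l ∈ S.lines, ∃! y : P, y ∈ l ∧ ∀ z ∈ l, S.graph.dist x y ≤ S.graph.dist x z)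

/-- `S` is dense: any two points at distance 2 have at least two common
neighbours. -/
def IsDense (S : SlimPLS P) : Prop :=
  ∀ x y : P, S.graph.dist x y = 2 →
    ∃ u v : P, u ≠ v ∧ S.Collinear x u ∧ S.Collinear u y ∧ S.Collinear x v ∧ S.Collinear v y

/-- `Q` is a quad: a convex subset of diameter 2 in which no point is collinear
with all other points of `Q`. -/
def IsQuad (S : SlimPLS P) (Q : Set P) : Prop :=
  (∀ u ∈ Q, ∀ v ∈ Q, ∀ w : P,
      S.graph.dist u w + S.graph.dist w v = S.graph.dist u v → w ∈ Q) ∧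
  (∀ u ∈ Q, ∀ v ∈ Q, S.graph.dist u v ≤ 2) ∧
  (∃ u ∈ Q, ∃ v ∈ Q, S.graph.dist u v = 2) ∧
  (∀ u ∈ Q, ∃ v ∈ Q, v ≠ u ∧ ¬ S.Collinear u v)

/-- A quad `Q` is of type `(2, t₂)` if every point of `Q` lies on exactly
`t₂ + 1` lines contained in `Q`. -/
def QuadType (S : SlimPLS P) (Q : Set P) (t₂ : ℕ) : Prop :=
  ∀ x ∈ Q, {l | l ∈ S.lines ∧ x ∈ l ∧ (l : Set P) ⊆ Q}.ncard = t₂ + 1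

/-- The point-quad pair `(x, Q)` is classical: there is a unique point `y ∈ Q`
nearest to `x`, with `d(x,z) = d(x,y) + d(y,z)` for all `z ∈ Q`. -/
def IsClassicalPair (S : SlimPLS P) (x : P) (Q : Set P) : Prop :=
  ∃! y : P, y ∈ Q ∧ ∀ z ∈ Q, S.graph.dist x z = S.graph.dist x y + S.graph.dist y z

/-- A quad is classical (big) if every point-quad pair with it is classical. -/
def IsClassicalQuad (S : SlimPLS P) (Q : Set P) : Prop :=
  ∀ x : P, S.IsClassicalPair x Q

/-- A subspace: any line containing two of its points is contained in it. -/
def IsSubspace (S : SlimPLS P) (X : Set P) : Prop :=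
  ∀ l ∈ S.lines, ∀ x ∈ l, ∀ y ∈ l, x ≠ y → x ∈ X → y ∈ X → (l : Set P) ⊆ X

/-- The subspace generated by a set of points. -/
def subspaceGen (S : SlimPLS P) (A : Set P) : Set P :=
  ⋂₀ {X | S.IsSubspace X ∧ A ⊆ X}

/-- `NPdim S` is the rank over `F₂` of the distance-3 adjacency matrix. -/
noncomputable def NPdim [Fintype P] (S : SlimPLS P) : ℕ :=
  Matrix.rank (Matrix.of fun x y : P => if S.graph.dist x y = 3 then (1 : ZMod 2) else 0)

/-- `dimV S` is the dimension of the universal representation module of `S`: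
the free `F₂`-vector space on the points modulo the span of the elements
`v_x + v_y + v_z` for the lines `{x,y,z}`. -/
noncomputable def dimV (S : SlimPLS P) : ℕ :=
  Module.finrank (ZMod 2)
    ((P →₀ ZMod 2) ⧸ Submodule.span (ZMod 2)
      {f : P →₀ ZMod 2 | ∃ l ∈ S.lines, f = ∑ x ∈ l, Finsupp.single x 1})

end SlimPLS

/-- A representation of a slim partial linear space `S`: an assignment of an
order-2 element `r x` of `R` to each point `x`, such that the images generate
`R` and for every line `{x,y,z}` the set `{1, r x, r y, r z}` is a Klein four
subgroup (`r x * r y = r z` for the three pairwise distinct points of a line). -/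
structure SlimPLS.Rep {P : Type*} (S : SlimPLS P) (R : Type*) [Group R] where
  r : P → R
  order_two : ∀ x : P, orderOf (r x) = 2
  gen : Subgroup.closure (Set.range r) = ⊤
  line_rel : ∀ l ∈ S.lines, ∀ x ∈ l, ∀ y ∈ l, ∀ z ∈ l,
    x ≠ y → x ≠ z → y ≠ z → r x * r y = r z

/-- A finite 2-group is extraspecial if its Frattini subgroup, commutator
subgroup and center coincide and have order 2. -/
def IsExtraspecial (G : Type*) [Group G] : Prop :=
  Finite G ∧ IsPGroup 2 G ∧ frattini G = commutator G ∧
    commutator G = Subgroup.center G ∧ Nat.card (Subgroup.center G) = 2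

/-!
Write `r x` for `ρ.r x`. As `r c = r a * r b` is an involution, `r a` and `r b` commute, and the
relation is symmetric in `a, b, c`. If two of the points are collinear, the third point of their
line has the same image as the remaining point, so by faithfulness `{a, b, c}` is a line.

Otherwise `{a, b, c}` is a triad, and every point `w` collinear with two of its points, say `a`
and `b`, is collinear with `c`: if not, `c` is collinear with the third point `w * a` of the line
`wa`, and the line through `c` and `w * a` ends in the point with image
`r c * r w * r a = r w * r b`, i.e. in `w * b`; so `w, w * a, w * b` would be a triangle.
Now a point `d` collinear with none of `a, b, c` has, on any line through it, a point `w`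
collinear with two of them, hence with all three. Then `w` is collinear with the four pairwise
non-collinear points `a, b, c, d`, which needs four lines through `w`, not three.
-/

namespace SlimPLS

variable {P : Type*} {S : SlimPLS P} {a b c d u v w x y z : P} {l : Finset P}

theorem Collinear.symm (h : S.Collinear x y) : S.Collinear y x :=
  ⟨h.1.symm, h.2.elim fun l hl => ⟨l, hl.1, hl.2.2, hl.2.1⟩⟩

theorem collinear_of_mem (hl : l ∈ S.lines) (hx : x ∈ l) (hy : y ∈ l) (hxy : x ≠ y) :
    S.Collinear x y :=
  ⟨hxy, l, hl, hx, hy⟩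

theorem isArc_triple (hab : ¬ S.Collinear a b) (hac : ¬ S.Collinear a c)
    (hbc : ¬ S.Collinear b c) : S.IsArc {a, b, c} := by
  intro x hx y hy hxy
  simp only [Set.mem_insert_iff, Set.mem_singleton_iff] at hx hy
  rcases hx with rfl | rfl | rfl <;> rcases hy with rfl | rfl | rfl <;>
    first | exact absurd rfl hxy | assumption | exact mt Collinear.symm ‹_›

theorem exists_eq_insert_of_mem (hl : l ∈ S.lines) (hx : x ∈ l) :
    ∃ u v, u ≠ x ∧ v ≠ x ∧ l = {x, u, v} := by
  obtain ⟨u, v, -, h⟩ := Finset.card_eq_two.mp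
    (by rw [Finset.card_erase_of_mem hx, S.three_points l hl] : (l.erase x).card = 2)
  have hu : u ∈ l.erase x := by simp [h]
  have hv : v ∈ l.erase x := by simp [h]
  refine ⟨u, v, Finset.ne_of_mem_erase hu, Finset.ne_of_mem_erase hv, ?_⟩
  rw [← h, Finset.insert_erase hx]

theorem exists_eq_insert_insert_of_mem (hl : l ∈ S.lines) (hx : x ∈ l) (hy : y ∈ l)
    (hxy : x ≠ y) : ∃ z, z ≠ x ∧ z ≠ y ∧ l = {x, y, z} := by
  have hy' : y ∈ l.erase x := Finset.mem_erase.mpr ⟨hxy.symm, hy⟩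
  obtain ⟨z, h⟩ := Finset.card_eq_one.mp
    (by rw [Finset.card_erase_of_mem hy', Finset.card_erase_of_mem hx, S.three_points l hl] :
      ((l.erase x).erase y).card = 1)
  have hz : z ∈ (l.erase x).erase y := h ▸ Finset.mem_singleton_self z
  refine ⟨z, Finset.ne_of_mem_erase (Finset.mem_of_mem_erase hz), Finset.ne_of_mem_erase hz, ?_⟩
  rw [← h, Finset.insert_erase hy', Finset.insert_erase hx]

namespace IsGQ

variable {t : ℕ} (hGQ : S.IsGQ t)
include hGQ

theorem exists_mem_lines (x : P) : ∃ l ∈ S.lines, x ∈ l :=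
  Set.nonempty_of_ncard_ne_zero (s := {l | l ∈ S.lines ∧ x ∈ l}) (by rw [hGQ.2.2.1 x]; omega)

theorem eq_of_collinear_of_collinear (hl : l ∈ S.lines) (hxl : x ∉ l) (hy : y ∈ l) (hz : z ∈ l)
    (hxy : S.Collinear x y) (hxz : S.Collinear x z) : y = z := by
  obtain ⟨p, -, hp⟩ := hGQ.2.2.2 x l hl hxl
  rw [hp y ⟨hy, hxy⟩, hp z ⟨hz, hxz⟩]

theorem collinear_of_not_mem (hl : ({u, v, w} : Finset P) ∈ S.lines)
    (hx : x ∉ ({u, v, w} : Finset P)) :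
    S.Collinear x u ∨ S.Collinear x v ∨ S.Collinear x w := by
  obtain ⟨y, ⟨hy, hxy⟩, -⟩ := hGQ.2.2.2 x _ hl hx
  simp only [Finset.mem_insert, Finset.mem_singleton] at hy
  rcases hy with rfl | rfl | rfl <;> simp [hxy]

/-- An arc of points collinear with `w` meets each of the `t + 1` lines on `w` at most once. -/
theorem ncard_le_of_isArc {T : Set P} (hT : S.IsArc T) (hw : ∀ x ∈ T, S.Collinear w x) :
    T.ncard ≤ t + 1 := by
  choose! f hf using fun x hx => (hw x hx).2
  rw [← hGQ.2.2.1 w]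
  refine Set.ncard_le_ncard_of_injOn f (fun x hx => ⟨(hf x hx).1, (hf x hx).2.1⟩) ?_
    (Set.finite_of_ncard_ne_zero (by rw [hGQ.2.2.1 w]; omega))
  intro x hx y hy hxy
  by_contra hne
  exact hT x hx y hy hne
    (collinear_of_mem (hf x hx).1 (hf x hx).2.2 (hxy ▸ (hf y hy).2.2) hne)

theorem exists_collinear_two_of_not_collinear (hda : ¬ S.Collinear d a)
    (hdb : ¬ S.Collinear d b) (hdc : ¬ S.Collinear d c) (nda : d ≠ a) (ndb : d ≠ b)
    (ndc : d ≠ c) :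
    ∃ w, S.Collinear w d ∧ ((S.Collinear w a ∧ S.Collinear w b) ∨
      (S.Collinear w a ∧ S.Collinear w c) ∨ (S.Collinear w b ∧ S.Collinear w c)) := by
  obtain ⟨l, hl, hdl⟩ := hGQ.exists_mem_lines d
  obtain ⟨u, v, hud, hvd, rfl⟩ := exists_eq_insert_of_mem hl hdl
  have hdu : S.Collinear d u := collinear_of_mem hl (by simp) (by simp) hud.symm
  have hdv : S.Collinear d v := collinear_of_mem hl (by simp) (by simp) hvd.symm
  have hside : ∀ x, d ≠ x → ¬ S.Collinear d x → S.Collinear u x ∨ S.Collinear v x := by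
    intro x hdx hcol
    have hxl : x ∉ ({d, u, v} : Finset P) := by
      simp only [Finset.mem_insert, Finset.mem_singleton, not_or]
      exact ⟨hdx.symm, by rintro rfl; exact hcol hdu, by rintro rfl; exact hcol hdv⟩
    rcases hGQ.collinear_of_not_mem hl hxl with h | h | h
    · exact absurd h.symm hcol
    · exact Or.inl h.symm
    · exact Or.inr h.symm
  have := hside a nda hda
  have := hside b ndb hdb
  have := hside c ndc hdc
  by_cases hu : (S.Collinear u a ∧ S.Collinear u b) ∨ (S.Collinear u a ∧ S.Collinear u c) ∨
      (S.Collinear u b ∧ S.Collinear u c)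
  · exact ⟨u, hdu.symm, hu⟩
  · exact ⟨v, hdv.symm, by tauto⟩

end IsGQ

namespace Rep

variable {R : Type*} [Group R] (ρ : S.Rep R)

theorem mul_self (x : P) : ρ.r x * ρ.r x = 1 := by
  rw [← pow_two, ← ρ.order_two x, pow_orderOf_eq_one]

theorem inv (x : P) : (ρ.r x)⁻¹ = ρ.r x :=
  inv_eq_of_mul_eq_one_right (ρ.mul_self x)

variable {ρ}

theorem commute_of_mul_eq (h : ρ.r x * ρ.r y = ρ.r z) : Commute (ρ.r x) (ρ.r y) :=
  calc ρ.r x * ρ.r y = (ρ.r z)⁻¹ := by rw [ρ.inv, h]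
    _ = ρ.r y * ρ.r x := by rw [← h, mul_inv_rev, ρ.inv, ρ.inv]

theorem mul_eq_comm (h : ρ.r x * ρ.r y = ρ.r z) : ρ.r y * ρ.r x = ρ.r z :=
  (commute_of_mul_eq h).eq ▸ h

theorem mul_eq_right (h : ρ.r x * ρ.r y = ρ.r z) : ρ.r x * ρ.r z = ρ.r y := by
  rw [← h, ← mul_assoc, ρ.mul_self, one_mul]

theorem exists_third (h : S.Collinear x y) :
    ∃ z, z ≠ x ∧ z ≠ y ∧ ({x, y, z} : Finset P) ∈ S.lines ∧ ρ.r x * ρ.r y = ρ.r z := by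
  obtain ⟨hxy, l, hl, hx, hy⟩ := h
  obtain ⟨z, hzx, hzy, rfl⟩ := exists_eq_insert_insert_of_mem hl hx hy hxy
  exact ⟨z, hzx, hzy, hl,
    ρ.line_rel _ hl x (by simp) y (by simp) z (by simp) hxy hzx.symm hzy.symm⟩

theorem commute_of_collinear (h : S.Collinear x y) : Commute (ρ.r x) (ρ.r y) :=
  have ⟨_, _, _, _, hr⟩ := exists_third h
  commute_of_mul_eq hr

theorem mem_lines_of_collinear_of_mul_eq (hf : Function.Injective ρ.r)
    (hr : ρ.r a * ρ.r b = ρ.r c) (hab : S.Collinear a b) : ({a, b, c} : Finset P) ∈ S.lines := by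
  obtain ⟨z, -, -, hl, hz⟩ := exists_third (ρ := ρ) hab
  rwa [hf (hz.symm.trans hr)] at hl

end Rep

namespace IsGQ

variable {t : ℕ} (hGQ : S.IsGQ t) {R : Type*} [Group R] {ρ : S.Rep R}
include hGQ

theorem collinear_of_collinear_of_mul_eq (hf : Function.Injective ρ.r)
    (hr : ρ.r a * ρ.r b = ρ.r c) (hab : ¬ S.Collinear a b) (hca : ¬ S.Collinear c a)
    (nca : c ≠ a) (hwa : S.Collinear w a) (hwb : S.Collinear w b) : S.Collinear w c := by
  by_contra hwc
  obtain ⟨wa, hwa_w, hwa_a, hLa, hr_wa⟩ := Rep.exists_third (ρ := ρ) hwa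
  obtain ⟨wb, hwb_w, -, hLb, hr_wb⟩ := Rep.exists_third (ρ := ρ) hwb
  have hcw : c ≠ w := by rintro rfl; exact hca hwa
  have hc_wa : S.Collinear c wa := by
    have hc_wa : c ≠ wa := by
      rintro rfl; exact hca (collinear_of_mem hLa (by simp) (by simp) hwa_a.symm).symm
    have hcLa : c ∉ ({w, a, wa} : Finset P) := by
      simp only [Finset.mem_insert, Finset.mem_singleton, not_or]
      exact ⟨hcw, nca, hc_wa⟩
    rcases hGQ.collinear_of_not_mem hLa hcLa with h | h | h
    · exact absurd h.symm hwc
    · exact absurd h hca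
    · exact h
  obtain ⟨e, -, he_wa, hLe, hr_e⟩ := Rep.exists_third (ρ := ρ) hc_wa
  have hab' : Commute (ρ.r a) (ρ.r b * ρ.r w) :=
    (Rep.commute_of_mul_eq hr).mul_right (Rep.commute_of_collinear hwa).symm
  have he : e = wb := hf <| by
    rw [← hr_e, ← hr_wb, ← hr, ← hr_wa]
    calc ρ.r a * ρ.r b * (ρ.r w * ρ.r a) = ρ.r a * (ρ.r b * ρ.r w) * ρ.r a := by
          simp only [mul_assoc]
      _ = ρ.r b * ρ.r w := by rw [hab'.eq, mul_assoc, ρ.mul_self, mul_one]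
      _ = ρ.r w * ρ.r b := (Rep.commute_of_collinear hwb).symm.eq
  rw [he] at hLe he_wa
  -- `w`, `wa` and `wb` are now pairwise collinear, but `wa` is off the line `{w, b, wb}`.
  have hwa_b : wa ≠ b := by
    rintro rfl; exact hab (collinear_of_mem hLa (by simp) (by simp) hwa_a.symm)
  exact hwb_w (hGQ.eq_of_collinear_of_collinear hLb (by simp [hwa_w, hwa_b, he_wa.symm])
    (by simp) (by simp) (collinear_of_mem hLa (by simp) (by simp) hwa_w)
    (collinear_of_mem hLe (by simp) (by simp) he_wa.symm)).symm

theorem collinear_three_of_collinear_two (hf : Function.Injective ρ.r)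
    (hr : ρ.r a * ρ.r b = ρ.r c) (hab : ¬ S.Collinear a b) (hac : ¬ S.Collinear a c)
    (hbc : ¬ S.Collinear b c) (nab : a ≠ b) (nac : a ≠ c)
    (hw : (S.Collinear w a ∧ S.Collinear w b) ∨ (S.Collinear w a ∧ S.Collinear w c) ∨
      (S.Collinear w b ∧ S.Collinear w c)) :
    S.Collinear w a ∧ S.Collinear w b ∧ S.Collinear w c := by
  rcases hw with ⟨ha, hb⟩ | ⟨ha, hc⟩ | ⟨hb, hc⟩
  · exact ⟨ha, hb, hGQ.collinear_of_collinear_of_mul_eq hf hr hab (mt Collinear.symm hac)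
      nac.symm ha hb⟩
  · exact ⟨ha, hGQ.collinear_of_collinear_of_mul_eq hf (Rep.mul_eq_right hr) hac
      (mt Collinear.symm hab) nab.symm ha hc, hc⟩
  · exact ⟨hGQ.collinear_of_collinear_of_mul_eq hf (Rep.mul_eq_right (Rep.mul_eq_comm hr))
      hbc hab nab hb hc, hb, hc⟩

theorem not_isArc_insert_of_mul_eq (ht : t ≤ 2) (hf : Function.Injective ρ.r)
    (hr : ρ.r a * ρ.r b = ρ.r c) (nab : a ≠ b) (nac : a ≠ c) (nbc : b ≠ c)
    (hd : d ∉ ({a, b, c} : Set P)) : ¬ S.IsArc (insert d {a, b, c}) := by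
  intro harc
  simp only [Set.mem_insert_iff, Set.mem_singleton_iff, not_or] at hd
  obtain ⟨nda, ndb, ndc⟩ := hd
  have hT : ∀ x ∈ insert d ({a, b, c} : Set P), ∀ y ∈ insert d ({a, b, c} : Set P),
      x ≠ y → ¬ S.Collinear x y := harc
  obtain ⟨w, hwd, hw⟩ := hGQ.exists_collinear_two_of_not_collinear
    (hT d (by simp) a (by simp) nda) (hT d (by simp) b (by simp) ndb)
    (hT d (by simp) c (by simp) ndc) nda ndb ndc
  obtain ⟨hwa, hwb, hwc⟩ := hGQ.collinear_three_of_collinear_two hf hr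
    (hT a (by simp) b (by simp) nab) (hT a (by simp) c (by simp) nac)
    (hT b (by simp) c (by simp) nbc) nab nac hw
  have hcard := hGQ.ncard_le_of_isArc harc (w := w) (by
    simp only [Set.mem_insert_iff, Set.mem_singleton_iff]
    rintro x (rfl | rfl | rfl | rfl) <;> assumption)
  rw [Set.ncard_insert_of_notMem (by simp [nda, ndb, ndc]),
    Set.ncard_eq_three.mpr ⟨a, b, c, nab, nac, nbc, rfl⟩] at hcard
  omega

end IsGQ

end SlimPLS

theorem gq22_triad_rel_line_or_arc_general {P : Type*} (S : SlimPLS P)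
    (hGQ : S.IsGQ 2) {R : Type*} [Group R] (ρ : S.Rep R)
    (hf : Function.Injective ρ.r)
    (a b c : P) (hab : a ≠ b) (hac : a ≠ c) (hbc : b ≠ c)
    (h : ρ.r a * ρ.r b * ρ.r c = 1) :
    (∃ l ∈ S.lines, (l : Set P) = {a, b, c}) ∨ S.Complete3Arc a b c := by
  have hr : ρ.r a * ρ.r b = ρ.r c := by rw [eq_inv_of_mul_eq_one_left h, ρ.inv]
  by_cases hcol : S.Collinear a b ∨ S.Collinear a c ∨ S.Collinear b c
  · left
    rcases hcol with hcol | hcol | hcol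
    · exact ⟨_, SlimPLS.Rep.mem_lines_of_collinear_of_mul_eq hf hr hcol, by simp⟩
    · exact ⟨_, SlimPLS.Rep.mem_lines_of_collinear_of_mul_eq hf
        (SlimPLS.Rep.mul_eq_right hr) hcol, by ext; simp; tauto⟩
    · exact ⟨_, SlimPLS.Rep.mem_lines_of_collinear_of_mul_eq hf
        (SlimPLS.Rep.mul_eq_right (SlimPLS.Rep.mul_eq_comm hr)) hcol, by ext; simp; tauto⟩
  · push Not at hcol
    obtain ⟨nab, nac, nbc⟩ := hcol
    exact Or.inr ⟨hab, hac, hbc, SlimPLS.isArc_triple nab nac nbc,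
      fun d hd => hGQ.not_isArc_insert_of_mul_eq le_rfl hf hr hab hac hbc hd⟩

/-- For a faithful representation of the `(2,2)`-GQ with
`|R| = 2^4`, if `r_a r_b r_c = 1` for three distinct points `a, b, c`,
then `{a,b,c}` is a line or a complete 3-arc. -/
theorem gq22_triad_rel_line_or_arc {P : Type*} (S : SlimPLS P)
    (hGQ : S.IsGQ 2) {R : Type*} [Group R] (ρ : S.Rep R)
    (hf : Function.Injective ρ.r) (hcard : Nat.card R = 2 ^ 4)
    (a b c : P) (hab : a ≠ b) (hac : a ≠ c) (hbc : b ≠ c)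
    (h : ρ.r a * ρ.r b * ρ.r c = 1) :
    (∃ l ∈ S.lines, (l : Set P) = {a, b, c}) ∨ S.Complete3Arc a b c :=
  gq22_triad_rel_line_or_arc_general S hGQ ρ hf a b c hab hac hbc h
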